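/- For the periodic Toda lattice of dimension 2k (k ≥ 3), the polynomial N := v₁v₃⋯v_{2k−1} is a Casimir polynomial for both brackets: for a = 1, 2 and every index j ∈ ℤ/2k, the identity Σ_{i ∈ ℤ/2k} (∂N/∂v_i) · Π_a(v)_{ij} = 0 holds in ℂ[v₀, …, v_{2k−1}]. -/
import Mathlib


open Matrix MvPolynomial

noncomputable section

/-- The first periodic Toda bracket matrix `Π₁`, indices in `ℤ/2k`. -/
def ptoda1 (k : ℕ) : Matrix (ZMod (2 * k)) (ZMod (2 * k))
    (MvPolynomial (ZMod (2 * k)) ℂ) :=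
  Matrix.of fun i j =>
    if j = i + 1 then (if Even i.val then -X j else -X i)
    else if i = j + 1 then (if Even j.val then X i else X j)
    else 0

/-- The second periodic Toda bracket matrix `Π₂`, indices in `ℤ/2k`. -/
def ptoda2 (k : ℕ) : Matrix (ZMod (2 * k)) (ZMod (2 * k))
    (MvPolynomial (ZMod (2 * k)) ℂ) :=
  Matrix.of fun i j =>
    if j = i + 1 then -(X i * X j)
    else if i = j + 1 then X i * X j
    else if j = i + 2 then
      (if Even i.val then -2 * (X (i + 1)) ^ 2 else C (-(1/2) : ℂ) * (X i * X j))
    else if i = j + 2 then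
      (if Even j.val then 2 * (X (j + 1)) ^ 2 else C ((1/2) : ℂ) * (X i * X j))
    else 0

/-- `N = v₁v₃⋯v_{2k-1}`. -/
def ptodaN (k : ℕ) : MvPolynomial (ZMod (2 * k)) ℂ :=
  ∏ l : Fin k, X ((2 * l.val + 1 : ℕ) : ZMod (2 * k))

/-! ### Auxiliary lemmas -/

lemma pd_prod_notMem {σ : Type*} [DecidableEq σ] {s : Finset σ} {m : σ}
    (h : m ∉ s) : pderiv m (∏ i ∈ s, X i : MvPolynomial σ ℂ) = 0 := by
  classical
  induction s using Finset.induction_on with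
  | empty => simp
  | @insert a s ha ih =>
      simp only [Finset.mem_insert, not_or] at h
      rw [Finset.prod_insert ha, pderiv_mul, ih h.2, pderiv_X_of_ne (Ne.symm h.1)]
      ring

lemma pd_prod_mem {σ : Type*} [DecidableEq σ] {s : Finset σ} {m : σ}
    (h : m ∈ s) : pderiv m (∏ i ∈ s, X i : MvPolynomial σ ℂ) = ∏ i ∈ s.erase m, X i := by
  classical
  rw [← Finset.mul_prod_erase s _ h, pderiv_mul,
    pd_prod_notMem (Finset.notMem_erase m s), pderiv_X_self]
  ring

/-- The set of odd indices. -/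
def oddSet (k : ℕ) [NeZero (2 * k)] : Finset (ZMod (2 * k)) :=
  Finset.univ.filter fun i => ¬ Even i.val

lemma ptodaN_eq (k : ℕ) [NeZero (2 * k)] : ptodaN k = ∏ i ∈ oddSet k, X i := by
  rw [ptodaN]
  refine Finset.prod_nbij (fun l => ((2 * l.val + 1 : ℕ) : ZMod (2 * k))) ?_ ?_ ?_ ?_
  · intro l _
    have hk : 0 < k := by
      rcases Nat.eq_zero_or_pos k with h | h
      · exact absurd (by omega : 2 * k = 0) (NeZero.ne (2 * k))
      · exact h
    simp only [oddSet, Finset.mem_filter, Finset.mem_univ, true_and, ZMod.val_natCast]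
    have h2 : (2 * l.val + 1) % (2 * k) % 2 = (2 * l.val + 1) % 2 :=
      Nat.mod_mod_of_dvd _ ⟨k, rfl⟩
    rw [Nat.even_iff]
    omega
  · intro l₁ _ l₂ _ h
    have h1 := congrArg ZMod.val h
    simp only [ZMod.val_natCast] at h1
    have e1 : 2 * l₁.val + 1 < 2 * k := by have := l₁.isLt; omega
    have e2 : 2 * l₂.val + 1 < 2 * k := by have := l₂.isLt; omega
    rw [Nat.mod_eq_of_lt e1, Nat.mod_eq_of_lt e2] at h1
    exact Fin.ext (by omega)
  · intro i hi
    simp only [oddSet, Finset.coe_filter, Set.mem_setOf_eq, Finset.mem_univ, true_and] at hi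
    have hlt : i.val < 2 * k := ZMod.val_lt i
    have hodd : i.val % 2 = 1 := Nat.odd_iff.mp (Nat.not_even_iff_odd.mp hi)
    refine ⟨⟨i.val / 2, by omega⟩, Finset.mem_coe.mpr (Finset.mem_univ _), ?_⟩
    have : 2 * (i.val / 2) + 1 = i.val := by omega
    simp only [this]
    exact ZMod.natCast_zmod_val i
  · intro l _; rfl

lemma pd_odd (k : ℕ) [NeZero (2 * k)] (i : ZMod (2 * k)) (hi : ¬ Even i.val) :
    pderiv i (ptodaN k) * X i = ptodaN k := by
  classical
  have hmem : i ∈ oddSet k := by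
    simp only [oddSet, Finset.mem_filter, Finset.mem_univ, true_and]; exact hi
  rw [ptodaN_eq k, pd_prod_mem hmem, Finset.prod_erase_mul _ _ hmem]

lemma pd_even (k : ℕ) [NeZero (2 * k)] (i : ZMod (2 * k)) (hi : Even i.val) :
    pderiv i (ptodaN k) = 0 := by
  classical
  have hmem : i ∉ oddSet k := by
    simp only [oddSet, Finset.mem_filter, Finset.mem_univ, true_and, not_not]; exact hi
  rw [ptodaN_eq k, pd_prod_notMem hmem]

lemma parity_step (k : ℕ) (hk : 3 ≤ k) (i : ZMod (2 * k)) :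
    Even ((i + 1).val) ↔ ¬ Even i.val := by
  haveI : NeZero (2 * k) := ⟨by omega⟩
  haveI : Fact (1 < 2 * k) := ⟨by omega⟩
  rw [ZMod.val_add, ZMod.val_one]
  have h2 : (i.val + 1) % (2 * k) % 2 = (i.val + 1) % 2 := Nat.mod_mod_of_dvd _ ⟨k, rfl⟩
  rw [Nat.even_iff, Nat.even_iff]
  omega

lemma parity_sub_one (k : ℕ) (hk : 3 ≤ k) (j : ZMod (2 * k)) :
    Even ((j - 1).val) ↔ ¬ Even j.val := by
  have h := parity_step k hk (j - 1)
  rw [show j - 1 + 1 = j from by ring] at h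
  tauto

lemma parity_add_two (k : ℕ) (hk : 3 ≤ k) (j : ZMod (2 * k)) :
    Even ((j + 2).val) ↔ Even j.val := by
  have a := parity_step k hk (j + 1)
  rw [show j + 1 + 1 = j + 2 from by ring] at a
  have b := parity_step k hk j
  tauto

lemma parity_sub_two (k : ℕ) (hk : 3 ≤ k) (j : ZMod (2 * k)) :
    Even ((j - 2).val) ↔ Even j.val := by
  have a := parity_sub_one k hk (j - 1)
  rw [show j - 1 - 1 = j - 2 from by ring] at a
  have b := parity_sub_one k hk j
  tauto

lemma cast_ne_zero' (k : ℕ) (hk : 3 ≤ k) (c : ℕ) (hc : 0 < c) (hc2 : c < 2 * k) :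
    (c : ZMod (2 * k)) ≠ 0 := by
  intro h
  have hd := (ZMod.natCast_eq_zero_iff c (2 * k)).mp h
  have := Nat.le_of_dvd hc hd
  omega

set_option maxHeartbeats 1600000 in
/-- `N = v₁v₃⋯v_{2k-1}` is a Casimir polynomial for both
periodic Toda brackets. -/
theorem ptoda_N_is_casimir (k : ℕ) (hk : 3 ≤ k) :
    haveI : NeZero (2 * k) := ⟨by omega⟩
    (∀ j : ZMod (2 * k),
        ∑ i : ZMod (2 * k), pderiv i (ptodaN k) * ptoda1 k i j = 0) ∧
    (∀ j : ZMod (2 * k),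
        ∑ i : ZMod (2 * k), pderiv i (ptodaN k) * ptoda2 k i j = 0) := by
  haveI : NeZero (2 * k) := ⟨by omega⟩
  have h1 : ((1 : ℕ) : ZMod (2 * k)) ≠ 0 := cast_ne_zero' k hk 1 (by omega) (by omega)
  have h2 : ((2 : ℕ) : ZMod (2 * k)) ≠ 0 := cast_ne_zero' k hk 2 (by omega) (by omega)
  have h3 : ((3 : ℕ) : ZMod (2 * k)) ≠ 0 := cast_ne_zero' k hk 3 (by omega) (by omega)
  have h4 : ((4 : ℕ) : ZMod (2 * k)) ≠ 0 := cast_ne_zero' k hk 4 (by omega) (by omega)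
  push_cast at h1 h2 h3 h4
  constructor
  · intro j
    have hS : ∑ i : ZMod (2 * k), pderiv i (ptodaN k) * ptoda1 k i j
        = ∑ i ∈ ({j - 1, j + 1} : Finset (ZMod (2 * k))),
            pderiv i (ptodaN k) * ptoda1 k i j := by
      refine (Finset.sum_subset (Finset.subset_univ _) ?_).symm
      intro i _ hi
      simp only [Finset.mem_insert, Finset.mem_singleton, not_or] at hi
      have c1 : ¬ (j = i + 1) := fun h => hi.1 (by linear_combination -h)
      have c2 : ¬ (i = j + 1) := hi.2
      rw [ptoda1, Matrix.of_apply, if_neg c1, if_neg c2, mul_zero]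
    rw [hS, Finset.sum_pair (fun h => h2 (by linear_combination -h))]
    have B1 : ptoda1 k (j - 1) j = (if Even (j - 1).val then -X j else -X (j - 1)) := by
      rw [ptoda1, Matrix.of_apply, if_pos (by ring)]
    have B2 : ptoda1 k (j + 1) j = (if Even j.val then X (j + 1) else X j) := by
      rw [ptoda1, Matrix.of_apply, if_neg (fun h => h2 (by linear_combination -h)), if_pos rfl]
    rw [B1, B2]
    have pm1 := parity_sub_one k hk j
    have pp1 := parity_step k hk j
    by_cases hj : Even j.val
    · have hm1 : ¬ Even (j - 1).val := by tauto
      have hp1 : ¬ Even (j + 1).val := by tauto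
      rw [if_neg hm1, if_pos hj]
      have d1 := pd_odd k (j - 1) hm1
      have d2 := pd_odd k (j + 1) hp1
      linear_combination d2 - d1
    · have hm1 : Even (j - 1).val := by tauto
      have hp1 : Even (j + 1).val := by tauto
      rw [pd_even k (j - 1) hm1, pd_even k (j + 1) hp1]
      ring
  · intro j
    have hS : ∑ i : ZMod (2 * k), pderiv i (ptodaN k) * ptoda2 k i j
        = ∑ i ∈ ({j - 2, j - 1, j + 1, j + 2} : Finset (ZMod (2 * k))),
            pderiv i (ptodaN k) * ptoda2 k i j := by
      refine (Finset.sum_subset (Finset.subset_univ _) ?_).symm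
      intro i _ hi
      simp only [Finset.mem_insert, Finset.mem_singleton, not_or] at hi
      have c1 : ¬ (j = i + 1) := fun h => hi.2.1 (by linear_combination -h)
      have c2 : ¬ (i = j + 1) := hi.2.2.1
      have c3 : ¬ (j = i + 2) := fun h => hi.1 (by linear_combination -h)
      have c4 : ¬ (i = j + 2) := hi.2.2.2
      rw [ptoda2, Matrix.of_apply, if_neg c1, if_neg c2, if_neg c3, if_neg c4, mul_zero]
    have hd1 : (j - 2 : ZMod (2 * k)) ≠ j - 1 := fun h => h1 (by linear_combination -h)
    have hd2 : (j - 2 : ZMod (2 * k)) ≠ j + 1 := fun h => h3 (by linear_combination -h)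
    have hd3 : (j - 2 : ZMod (2 * k)) ≠ j + 2 := fun h => h4 (by linear_combination -h)
    have hd4 : (j - 1 : ZMod (2 * k)) ≠ j + 1 := fun h => h2 (by linear_combination -h)
    have hd5 : (j - 1 : ZMod (2 * k)) ≠ j + 2 := fun h => h3 (by linear_combination -h)
    have hd6 : (j + 1 : ZMod (2 * k)) ≠ j + 2 := fun h => h1 (by linear_combination -h)
    rw [hS]
    rw [show ({j - 2, j - 1, j + 1, j + 2} : Finset (ZMod (2 * k)))
        = insert (j - 2) (insert (j - 1) {j + 1, j + 2}) from rfl]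
    rw [Finset.sum_insert (by simp [hd1, hd2, hd3]),
      Finset.sum_insert (by simp [hd4, hd5]),
      Finset.sum_pair hd6]
    have A : ptoda2 k (j - 2) j
        = (if Even (j - 2).val then -2 * (X (j - 2 + 1)) ^ 2
            else C (-(1/2) : ℂ) * (X (j - 2) * X j)) := by
      rw [ptoda2, Matrix.of_apply, if_neg (fun h => h1 (by linear_combination h)),
        if_neg (fun h => h3 (by linear_combination -h)), if_pos (by ring)]
    have B : ptoda2 k (j - 1) j = -(X (j - 1) * X j) := by
      rw [ptoda2, Matrix.of_apply, if_pos (by ring)]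
    have Cc : ptoda2 k (j + 1) j = X (j + 1) * X j := by
      rw [ptoda2, Matrix.of_apply, if_neg (fun h => h2 (by linear_combination -h)), if_pos rfl]
    have D : ptoda2 k (j + 2) j
        = (if Even j.val then 2 * (X (j + 1)) ^ 2
            else C ((1/2) : ℂ) * (X (j + 2) * X j)) := by
      rw [ptoda2, Matrix.of_apply, if_neg (fun h => h3 (by linear_combination -h)),
        if_neg (fun h => h1 (by linear_combination h)),
        if_neg (fun h => h4 (by linear_combination -h)), if_pos rfl]
    rw [A, B, Cc, D]
    have pm1 := parity_sub_one k hk j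
    have pp1 := parity_step k hk j
    have pm2 := parity_sub_two k hk j
    have pp2 := parity_add_two k hk j
    by_cases hj : Even j.val
    · have hm2 : Even (j - 2).val := by tauto
      have hp2 : Even (j + 2).val := by tauto
      have hm1 : ¬ Even (j - 1).val := by tauto
      have hp1 : ¬ Even (j + 1).val := by tauto
      rw [if_pos hm2, if_pos hj, pd_even k (j - 2) hm2, pd_even k (j + 2) hp2]
      have d1 := pd_odd k (j - 1) hm1
      have d2 := pd_odd k (j + 1) hp1
      linear_combination X j * d2 - X j * d1
    · have hm2 : ¬ Even (j - 2).val := by tauto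
      have hp2 : ¬ Even (j + 2).val := by tauto
      have hm1 : Even (j - 1).val := by tauto
      have hp1 : Even (j + 1).val := by tauto
      rw [if_neg hm2, if_neg hj, pd_even k (j - 1) hm1, pd_even k (j + 1) hp1,
        show (C (-(1/2) : ℂ) : MvPolynomial (ZMod (2 * k)) ℂ) = -C ((1/2) : ℂ) from by
          rw [map_neg]]
      have d1 := pd_odd k (j - 2) hm2
      have d2 := pd_odd k (j + 2) hp2
      linear_combination (C ((1/2) : ℂ) * X j) * d2 - (C ((1/2) : ℂ) * X j) * d1
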